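/- Consider the ODE system x' = R₁ x y, y' = −R₁ x y + R₂ y z, z' = −R₂ y z with R₁ > 0, R₂ > 0 and initial data x₀, y₀, z₀ > 0 with x₀ + y₀ + z₀ = 1. Then x(t) + y(t) + z(t) = 1 for all t ≥ 0, x is nondecreasing, z is nonincreasing, and if x₀ > R₂/(R₁ + R₂), then y(t) ≤ y₀ e^{Ct} with C = R₂ − x₀(R₁+R₂) < 0, so y(t) → 0 as t → ∞. -/

import Mathlib

/-!
The three derivatives sum to zero, so the total mass is conserved; `x' = R₁xy ≥ 0` and
`z' = -R₂yz ≤ 0` give the monotonicity. Since `z ≤ 1 - x` and `x ≥ x₀`,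
`y' = y (R₂ z - R₁ x) ≤ y (R₂ - x (R₁ + R₂)) ≤ C y`, and Grönwall's inequality yields
`y t ≤ y₀ e^{Ct}`, with `C < 0` exactly when `x₀ > R₂ / (R₁ + R₂)`.
-/

open Real Set Filter

section DerivOnIci

variable {f f' : ℝ → ℝ} {a : ℝ}

lemma continuousOn_Ici_of_hasDerivAt (hf : ∀ t ≥ a, HasDerivAt f (f' t) t) :
    ContinuousOn f (Ici a) :=
  fun t ht => (hf t ht).continuousAt.continuousWithinAt

lemma monotoneOn_Ici_of_hasDerivAt_nonneg (hf : ∀ t ≥ a, HasDerivAt f (f' t) t)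
    (hf' : ∀ t ≥ a, 0 ≤ f' t) : MonotoneOn f (Ici a) :=
  monotoneOn_of_hasDerivWithinAt_nonneg (convex_Ici a) (continuousOn_Ici_of_hasDerivAt hf)
    (fun t ht => (hf t (interior_subset ht)).hasDerivWithinAt)
    (fun t ht => hf' t (interior_subset ht))

lemma antitoneOn_Ici_of_hasDerivAt_nonpos (hf : ∀ t ≥ a, HasDerivAt f (f' t) t)
    (hf' : ∀ t ≥ a, f' t ≤ 0) : AntitoneOn f (Ici a) :=
  antitoneOn_of_hasDerivWithinAt_nonpos (convex_Ici a) (continuousOn_Ici_of_hasDerivAt hf)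
    (fun t ht => (hf t (interior_subset ht)).hasDerivWithinAt)
    (fun t ht => hf' t (interior_subset ht))

lemma eq_of_hasDerivAt_zero_Ici (hf : ∀ t ≥ a, HasDerivAt f 0 t) : ∀ t ≥ a, f t = f a :=
  fun _ ht => le_antisymm
    (antitoneOn_Ici_of_hasDerivAt_nonpos hf (fun _ _ => le_rfl) self_mem_Ici ht ht)
    (monotoneOn_Ici_of_hasDerivAt_nonneg hf (fun _ _ => le_rfl) self_mem_Ici ht ht)

lemma le_mul_exp_of_hasDerivAt_le_mul {K δ : ℝ} (hf : ∀ t ≥ a, HasDerivAt f (f' t) t)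
    (ha : f a ≤ δ) (hbound : ∀ t ≥ a, f' t ≤ K * f t) :
    ∀ t ≥ a, f t ≤ δ * exp (K * (t - a)) := by
  intro t ht
  have h := le_gronwallBound_of_liminf_deriv_right_le (ε := 0) (b := t)
    ((continuousOn_Ici_of_hasDerivAt hf).mono Icc_subset_Ici_self)
    (fun s hs _ hr => (hf s hs.1).hasDerivWithinAt.liminf_right_slope_le hr) ha
    (fun s hs => by simpa using hbound s hs.1) t ⟨ht, le_rfl⟩
  rwa [gronwallBound_ε0] at h

end DerivOnIci

lemma tendsto_zero_of_nonneg_of_le_mul_exp {f : ℝ → ℝ} {δ C : ℝ} (hC : C < 0)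
    (hf₀ : ∀ t ≥ (0 : ℝ), 0 ≤ f t) (hf : ∀ t ≥ (0 : ℝ), f t ≤ δ * exp (C * t)) :
    Tendsto f atTop (nhds 0) := by
  have hexp : Tendsto (fun t => δ * exp (C * t)) atTop (nhds 0) := by
    simpa using (tendsto_exp_atBot.comp (tendsto_id.const_mul_atTop_of_neg hC)).const_mul δ
  exact squeeze_zero' (eventually_ge_atTop 0 |>.mono hf₀) (eventually_ge_atTop 0 |>.mono hf) hexp

lemma photon_rate_le {R₁ R₂ x₀ x y z : ℝ} (hR₁ : 0 ≤ R₁) (hR₂ : 0 ≤ R₂) (hy : 0 ≤ y)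
    (hxz : x + z ≤ 1) (hx : x₀ ≤ x) :
    -(R₁ * x * y) + R₂ * y * z ≤ (R₂ - x₀ * (R₁ + R₂)) * y :=
  calc -(R₁ * x * y) + R₂ * y * z = (R₂ * z - R₁ * x) * y := by ring
    _ ≤ (R₂ - x * (R₁ + R₂)) * y := mul_le_mul_of_nonneg_right (by nlinarith) hy
    _ ≤ (R₂ - x₀ * (R₁ + R₂)) * y := by gcongr

theorem stmt14 (R₁ R₂ x₀ y₀ z₀ : ℝ) (x y z : ℝ → ℝ)
    (hR1 : 0 < R₁) (hR2 : 0 < R₂)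
    (hsum : x₀ + y₀ + z₀ = 1)
    (hx : ∀ t ≥ (0:ℝ), HasDerivAt x (R₁ * x t * y t) t)
    (hy : ∀ t ≥ (0:ℝ), HasDerivAt y (-(R₁ * x t * y t) + R₂ * y t * z t) t)
    (hz : ∀ t ≥ (0:ℝ), HasDerivAt z (-(R₂ * y t * z t)) t)
    (hxi : x 0 = x₀) (hyi : y 0 = y₀) (hzi : z 0 = z₀)
    (hpos : ∀ t ≥ (0:ℝ), 0 < x t ∧ 0 < y t ∧ 0 < z t) :
    (∀ t ≥ (0:ℝ), x t + y t + z t = 1) ∧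
    MonotoneOn x (Set.Ici 0) ∧
    AntitoneOn z (Set.Ici 0) ∧
    (x₀ > R₂ / (R₁ + R₂) →
      (∀ t ≥ (0:ℝ), y t ≤ y₀ * Real.exp ((R₂ - x₀ * (R₁ + R₂)) * t)) ∧
      R₂ - x₀ * (R₁ + R₂) < 0 ∧
      Tendsto y atTop (nhds 0)) := by
  have hmass : ∀ t ≥ (0:ℝ), x t + y t + z t = 1 := by
    have hconst := eq_of_hasDerivAt_zero_Ici (f := fun t => x t + y t + z t) fun t ht =>
      (((hx t ht).add (hy t ht)).add (hz t ht)).congr_deriv (by ring)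
    intro t ht
    rw [hconst t ht, hxi, hyi, hzi, hsum]
  have hxmono : MonotoneOn x (Ici 0) := monotoneOn_Ici_of_hasDerivAt_nonneg hx fun t ht => by
    obtain ⟨hxt, hyt, -⟩ := hpos t ht
    positivity
  have hzanti : AntitoneOn z (Ici 0) := antitoneOn_Ici_of_hasDerivAt_nonpos hz fun t ht => by
    obtain ⟨-, hyt, hzt⟩ := hpos t ht
    exact neg_nonpos.mpr (by positivity)
  refine ⟨hmass, hxmono, hzanti, fun hlarge => ?_⟩
  have hC : R₂ - x₀ * (R₁ + R₂) < 0 := by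
    rw [gt_iff_lt, div_lt_iff₀ (by positivity)] at hlarge
    linarith
  have hbound : ∀ t ≥ (0:ℝ), y t ≤ y₀ * exp ((R₂ - x₀ * (R₁ + R₂)) * t) := by
    simpa using le_mul_exp_of_hasDerivAt_le_mul hy hyi.le fun t ht => by
      obtain ⟨-, hyt, -⟩ := hpos t ht
      exact photon_rate_le hR1.le hR2.le hyt.le (by linarith [hmass t ht])
        (hxi ▸ hxmono self_mem_Ici ht ht)
  exact ⟨hbound, hC, tendsto_zero_of_nonneg_of_le_mul_exp hC (fun t ht => (hpos t ht).2.1.le)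
    hbound⟩
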